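/- In G3cp, if Γ ⇒ φ→ψ, Δ has a derivation of depth at most n, then Γ, φ ⇒ ψ, Δ has a derivation of depth at most n (inversion for right implication). -/
import Mathlib


set_option autoImplicit true

inductive PropForm : Type
  | var : ℕ → PropForm
  | fls : PropForm
  | tru : PropForm
  | conj : PropForm → PropForm → PropForm
  | disj : PropForm → PropForm → PropForm
  | arr : PropForm → PropForm → PropForm
deriving DecidableEq

open PropForm

/-- The set of propositional atoms occurring in a formula. -/
def atoms : PropForm → Finset ℕ
  | var p => {p}
  | fls => ∅
  | tru => ∅
  | conj φ ψ => atoms φ ∪ atoms ψ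
  | disj φ ψ => atoms φ ∪ atoms ψ
  | arr φ ψ => atoms φ ∪ atoms ψ

/-- `G3cpN n Γ Δ` : the multi-conclusion sequent `Γ ⇒ Δ` has a G3cp-derivation of depth at most `n`. -/
inductive G3cpN : ℕ → Multiset PropForm → Multiset PropForm → Prop
  | ax (n : ℕ) (Γ Δ : Multiset PropForm) (p : ℕ) : G3cpN n (var p ::ₘ Γ) (var p ::ₘ Δ)
  | flsL (n : ℕ) (Γ Δ : Multiset PropForm) : G3cpN n (fls ::ₘ Γ) Δ
  | truR (n : ℕ) (Γ Δ : Multiset PropForm) : G3cpN n Γ (tru ::ₘ Δ)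
  | conjL : G3cpN n (φ ::ₘ ψ ::ₘ Γ) Δ → G3cpN (n+1) (conj φ ψ ::ₘ Γ) Δ
  | conjR : G3cpN n Γ (φ ::ₘ Δ) → G3cpN n Γ (ψ ::ₘ Δ) → G3cpN (n+1) Γ (conj φ ψ ::ₘ Δ)
  | disjL : G3cpN n (φ ::ₘ Γ) Δ → G3cpN n (ψ ::ₘ Γ) Δ → G3cpN (n+1) (disj φ ψ ::ₘ Γ) Δ
  | disjR : G3cpN n Γ (φ ::ₘ ψ ::ₘ Δ) → G3cpN (n+1) Γ (disj φ ψ ::ₘ Δ)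
  | arrL : G3cpN n Γ (φ ::ₘ Δ) → G3cpN n (ψ ::ₘ Γ) Δ → G3cpN (n+1) (arr φ ψ ::ₘ Γ) Δ
  | arrR : G3cpN n (φ ::ₘ Γ) (ψ ::ₘ Δ) → G3cpN (n+1) Γ (arr φ ψ ::ₘ Δ)

lemma G3cpN_succ {n : ℕ} {Γ Δ : Multiset PropForm} (h : G3cpN n Γ Δ) :
    G3cpN (n+1) Γ Δ := by
  induction h with
  | ax n Γ Δ p => exact .ax _ _ _ _
  | flsL n Γ Δ => exact .flsL _ _ _
  | truR n Γ Δ => exact .truR _ _ _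
  | conjL _ ih => exact .conjL ih
  | conjR _ _ ih1 ih2 => exact .conjR ih1 ih2
  | disjL _ _ ih1 ih2 => exact .disjL ih1 ih2
  | disjR _ ih => exact .disjR ih
  | arrL _ _ ih1 ih2 => exact .arrL ih1 ih2
  | arrR _ ih => exact .arrR ih

lemma G3cpN_cast {n : ℕ} {Γ Δ Γ' Δ' : Multiset PropForm} (h : G3cpN n Γ Δ)
    (hΓ : Γ = Γ') (hΔ : Δ = Δ') : G3cpN n Γ' Δ' := hΓ ▸ hΔ ▸ h

lemma G3cp_arrR_inv_aux (φ ψ : PropForm) {n : ℕ} {Γ Θ : Multiset PropForm}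
    (h : G3cpN n Γ Θ) : ∀ Δ, Θ = arr φ ψ ::ₘ Δ → G3cpN n (φ ::ₘ Γ) (ψ ::ₘ Δ) := by
  induction h with
  | ax n Γ Δ' p =>
    intro Δ hΔ
    rw [Multiset.cons_eq_cons] at hΔ
    rcases hΔ with ⟨h1, _⟩ | ⟨_, cs, h1, h2⟩
    · exact absurd h1 (by simp)
    · subst h2
      exact G3cpN_cast (.ax n (φ ::ₘ Γ) (ψ ::ₘ cs) p) (Multiset.cons_swap _ _ _)
        (Multiset.cons_swap _ _ _)
  | flsL n Γ Δ' =>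
    intro Δ hΔ
    exact G3cpN_cast (.flsL n (φ ::ₘ Γ) (ψ ::ₘ Δ)) (Multiset.cons_swap _ _ _) rfl
  | truR n Γ Δ' =>
    intro Δ hΔ
    rw [Multiset.cons_eq_cons] at hΔ
    rcases hΔ with ⟨h1, _⟩ | ⟨_, cs, h1, h2⟩
    · exact absurd h1 (by simp)
    · subst h2
      exact G3cpN_cast (.truR n (φ ::ₘ Γ) (ψ ::ₘ cs)) rfl (Multiset.cons_swap _ _ _)
  | conjL _ ih =>
    intro Δ hΔ
    subst hΔ
    have := ih Δ rfl
    refine G3cpN_cast (G3cpN.conjL (G3cpN_cast this ?_ rfl)) (Multiset.cons_swap _ _ _) rfl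
    rw [Multiset.cons_swap φ, Multiset.cons_swap φ]
  | @conjR n Γ φ₀ Δ' ψ₀ _ _ ih1 ih2 =>
    intro Δ hΔ
    rw [Multiset.cons_eq_cons] at hΔ
    rcases hΔ with ⟨h1, _⟩ | ⟨_, cs, h1, h2⟩
    · exact absurd h1 (by simp)
    · subst h1 h2
      have hA := ih1 (φ₀ ::ₘ cs) (Multiset.cons_swap _ _ _)
      have hB := ih2 (ψ₀ ::ₘ cs) (Multiset.cons_swap _ _ _)
      refine G3cpN_cast (G3cpN.conjR (G3cpN_cast hA rfl (Multiset.cons_swap _ _ _))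
        (G3cpN_cast hB rfl (Multiset.cons_swap _ _ _))) rfl (Multiset.cons_swap _ _ _)
  | disjL _ _ ih1 ih2 =>
    intro Δ hΔ
    subst hΔ
    have hA := ih1 Δ rfl
    have hB := ih2 Δ rfl
    refine G3cpN_cast (G3cpN.disjL (G3cpN_cast hA (Multiset.cons_swap _ _ _) rfl)
      (G3cpN_cast hB (Multiset.cons_swap _ _ _) rfl)) (Multiset.cons_swap _ _ _) rfl
  | @disjR n Γ φ₀ ψ₀ Δ' _ ih =>
    intro Δ hΔ
    rw [Multiset.cons_eq_cons] at hΔ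
    rcases hΔ with ⟨h1, _⟩ | ⟨_, cs, h1, h2⟩
    · exact absurd h1 (by simp)
    · subst h1 h2
      have hA := ih (φ₀ ::ₘ ψ₀ ::ₘ cs) (by rw [Multiset.cons_swap ψ₀, Multiset.cons_swap φ₀])
      refine G3cpN_cast (G3cpN.disjR (G3cpN_cast hA rfl ?_)) rfl (Multiset.cons_swap _ _ _)
      rw [Multiset.cons_swap ψ φ₀, Multiset.cons_swap ψ ψ₀]
  | @arrL n Γ φ₀ Δ' ψ₀ _ _ ih1 ih2 =>
    intro Δ hΔ
    subst hΔ
    have hA := ih1 (φ₀ ::ₘ Δ) (Multiset.cons_swap _ _ _)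
    have hB := ih2 Δ rfl
    refine G3cpN_cast (G3cpN.arrL (G3cpN_cast hA rfl (Multiset.cons_swap _ _ _))
      (G3cpN_cast hB (Multiset.cons_swap _ _ _) rfl)) (Multiset.cons_swap _ _ _) rfl
  | @arrR n φ₀ Γ ψ₀ Δ' hprem ih =>
    intro Δ hΔ
    rw [Multiset.cons_eq_cons] at hΔ
    rcases hΔ with ⟨h1, h2⟩ | ⟨_, cs, h1, h2⟩
    · obtain ⟨rfl, rfl⟩ : φ₀ = φ ∧ ψ₀ = ψ := by
        injection h1 with a b; exact ⟨a, b⟩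
      subst h2
      exact G3cpN_succ hprem
    · subst h1 h2
      have hA := ih (ψ₀ ::ₘ cs) (Multiset.cons_swap _ _ _)
      refine G3cpN_cast (G3cpN.arrR (G3cpN_cast hA (Multiset.cons_swap _ _ _) ?_))
        rfl (Multiset.cons_swap _ _ _)
      exact Multiset.cons_swap _ _ _

/-- Inversion for right arrication in G3cp, depth-preserving: if `Γ ⇒ φ → ψ, Δ` has a
derivation of depth at most `n`, then so does `Γ, φ ⇒ ψ, Δ`. -/
theorem G3cp_arrR_inversion
    (n : ℕ) (Γ Δ : Multiset PropForm) (φ ψ : PropForm)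
    (h : G3cpN n Γ (arr φ ψ ::ₘ Δ)) : G3cpN n (φ ::ₘ Γ) (ψ ::ₘ Δ) := by
  exact G3cp_arrR_inv_aux φ ψ h Δ rfl
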